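/- Let S be a transformation semigroup on a finite set Ω containing a primitive permutation group G, and suppose the minimum rank of an element of S is r with r > 1. Then S contains no element of rank r+1. -/

import Mathlib

open Finset

variable {Ω : Type*} [Fintype Ω] [DecidableEq Ω]

/-- The graph associated to a set of transformations: `v ~ w` iff no `f ∈ S` collapses them. -/
def Gr (S : Set (Ω → Ω)) : SimpleGraph Ω where
  Adj v w := v ≠ w ∧ ∀ f ∈ S, f v ≠ f w
  symm := ⟨by rintro v w ⟨h1, h2⟩; exact ⟨h1.symm, fun f hf => (h2 f hf).symm⟩⟩
  loopless := ⟨by rintro v ⟨h, _⟩; exact h rfl⟩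

/-- The rank of a transformation of a finite set: the size of its image. -/
def rank (f : Ω → Ω) : ℕ := (Finset.univ.image f).card

/-- A permutation group is primitive if it is transitive and all blocks are trivial. -/
def IsPrimitive (G : Subgroup (Equiv.Perm Ω)) : Prop :=
  MulAction.IsPretransitive G Ω ∧
    ∀ B : Set Ω, MulAction.IsBlock G B → B.Subsingleton ∨ B = Set.univ

/-- The semigroup generated by a permutation group `G` and a transformation `f`. -/
def genSemigroup (G : Subgroup (Equiv.Perm Ω)) (f : Ω → Ω) : Subsemigroup (Function.End Ω) :=
  Subsemigroup.closure ((fun g : Equiv.Perm Ω => (g : Ω → Ω)) '' (G : Set (Equiv.Perm Ω)) ∪ {f})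

/-- `G` synchronizes `f` if `⟨G, f⟩` contains a constant map. -/
def Synchronizes (G : Subgroup (Equiv.Perm Ω)) (f : Ω → Ω) : Prop :=
  ∃ h ∈ genSemigroup G f, ∃ c : Ω, ∀ x : Ω, h x = c

/-- `f` has kernel type `(k,1,…,1)`: one kernel class of size `k`, all others singletons. -/
def KernelTypeK (f : Ω → Ω) (k : ℕ) : Prop :=
  ∃ A : Finset Ω, A.card = k ∧ (∀ x ∈ A, ∀ y ∈ A, f x = f y) ∧
    ∀ x y : Ω, f x = f y → x = y ∨ (x ∈ A ∧ y ∈ A)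

/-- `f` has kernel type `(3,2,1,…,1)`. -/
def KernelType32 (f : Ω → Ω) : Prop :=
  ∃ A B : Finset Ω, A.card = 3 ∧ B.card = 2 ∧
    (∀ x ∈ A, ∀ y ∈ A, f x = f y) ∧ (∀ x ∈ B, ∀ y ∈ B, f x = f y) ∧
    ∀ x y : Ω, f x = f y → x = y ∨ (x ∈ A ∧ y ∈ A) ∨ (x ∈ B ∧ y ∈ B)

/-!
Neumann's counting argument: if `f, s ∈ S` have minimal rank `r`, every `G`-translate of the
image of `f` is a transversal of the kernel of `s`; counting pairs `(g, b)` with `b ∈ im f` and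
`s (g • b) = c` shows that every kernel class of `s` has `|Ω| / r` elements.

If `t ∈ S` had rank `r + 1`, then for each `g ∈ G` the map `f ∘ g ∘ t` has rank `r`, so it merges
exactly two of the `r + 1` kernel classes of `t`. As all its kernel classes have `|Ω| / r`
elements, the two merged classes are the ones of size less than `|Ω| / r`, which do not depend
on `g`. Hence there are `x ≠ y` with `f (g x) = f (g y)` for all `g ∈ G`. The points `z` with
`f (g z) = f (g x)` for all `g` form a block, which by primitivity is all of `Ω`, so `f` is
constant, contradicting `r > 1`.
-/

open MulAction

theorem rank_comp (g f : Ω → Ω) : rank (g ∘ f) = ((univ.image f).image g).card := by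
  rw [rank, image_image]

theorem rank_comp_le_left (g f : Ω → Ω) : rank (g ∘ f) ≤ rank g := by
  rw [rank_comp]
  exact card_le_card (image_subset_image (subset_univ _))

theorem rank_comp_le_right (g f : Ω → Ω) : rank (g ∘ f) ≤ rank f := by
  rw [rank_comp]
  exact card_image_le

theorem rank_comp_of_surjective (g : Ω → Ω) {f : Ω → Ω} (hf : f.Surjective) :
    rank (g ∘ f) = rank g := by
  rw [rank_comp, image_univ_of_surjective hf]
  rfl

theorem rank_le_one_of_forall_eq {f : Ω → Ω} {c : Ω} (hf : ∀ z, f z = c) : rank f ≤ 1 := by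
  refine card_le_one.mpr ?_
  simp only [mem_image, mem_univ, true_and]
  rintro _ ⟨x, rfl⟩ _ ⟨y, rfl⟩
  rw [hf x, hf y]

theorem card_filter_image_eq_one {s f : Ω → Ω} (hs : rank (s ∘ f) = rank s)
    (hf : rank (s ∘ f) = rank f) {c : Ω} (hc : c ∈ univ.image s) :
    #{b ∈ univ.image f | s b = c} = 1 := by
  rw [rank_comp] at hs hf
  have hinj : Set.InjOn s (univ.image f : Finset Ω) := card_image_iff.mp hf
  have himage : (univ.image f).image s = univ.image s :=
    eq_of_subset_of_card_le (image_subset_image (subset_univ _)) hs.ge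
  rw [← himage] at hc
  obtain ⟨b, hb, rfl⟩ := mem_image.mp hc
  refine card_eq_one.mpr
    ⟨b, eq_singleton_iff_unique_mem.mpr ⟨mem_filter.mpr ⟨hb, rfl⟩, ?_⟩⟩
  intro a ha
  rw [mem_filter] at ha
  exact hinj ha.1 hb ha.2

theorem card_image_add_two_le {α β : Type*} [DecidableEq α] [DecidableEq β] {A : Finset α}
    {u : α → β} {x x' y y' : α} (hx : x ∈ A) (hx' : x' ∈ A) (hy : y ∈ A) (hy' : y' ∈ A)
    (hxx' : x ≠ x') (hyy' : y ≠ y') (hux : u x = u x') (huy : u y = u y') (hxy : u x ≠ u y) :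
    #(A.image u) + 2 ≤ #A := by
  have hx'y' : x' ≠ y' := fun h => hxy (by rw [hux, huy, h])
  have hsub : A.image u ⊆ ((A.erase x').erase y').image u := by
    intro w hw
    obtain ⟨a, ha, rfl⟩ := mem_image.mp hw
    simp only [mem_image, mem_erase]
    by_cases hax : a = x'
    · exact ⟨x, ⟨fun h => hxy (by rw [h, huy]), hxx', hx⟩, hax ▸ hux⟩
    by_cases hay : a = y'
    · exact ⟨y, ⟨hyy', fun h => hxy (by rw [hux, h]), hy⟩, hay ▸ huy⟩
    exact ⟨a, ⟨hay, hax, ha⟩, rfl⟩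
  have hA : #((A.erase x').erase y') + 2 = #A := by
    rw [← card_erase_add_one hx', ← card_erase_add_one (mem_erase.mpr ⟨hx'y'.symm, hy'⟩)]
  calc #(A.image u) + 2 ≤ #((A.erase x').erase y') + 2 :=
        Nat.add_le_add_right ((card_le_card hsub).trans card_image_le) 2
    _ = #A := hA

theorem card_fiber_lt_of_apply_eq {α β γ : Type*} [Fintype α] [DecidableEq β] [DecidableEq γ]
    {t : α → β} {u : β → γ} {x y : β} (hxy : x ≠ y) (hy : y ∈ univ.image t)
    (hu : u x = u y) :
    #{z | t z = x} < #{z | u (t z) = u x} := by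
  obtain ⟨z, -, hz⟩ := mem_image.mp hy
  refine card_lt_card ((ssubset_iff_of_subset fun w hw => ?_).mpr ⟨z, ?_, ?_⟩)
  · simp only [mem_filter, mem_univ, true_and] at hw ⊢
    rw [hw]
  · simp [hz, hu]
  · simp [hz, hxy.symm]

theorem exists_ne_apply_eq_of_card_fiber_lt {α β γ : Type*} [Fintype α] [DecidableEq β]
    [DecidableEq γ] {t : α → β} {u : β → γ} {x : β}
    (h : #{z | t z = x} < #{z | u (t z) = u x}) : ∃ z, t z ≠ x ∧ u (t z) = u x := by
  obtain ⟨z, hz, hz'⟩ := exists_mem_notMem_of_card_lt_card h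
  simp only [mem_filter, mem_univ, true_and] at hz hz'
  exact ⟨z, hz', hz⟩

theorem isBlock_setOf_forall_smul_eq {G X β : Type*} [Group G] [MulAction G X] (φ : X → β)
    (x : X) : IsBlock G {z | ∀ g : G, φ (g • z) = φ (g • x)} := by
  refine isBlock_iff_smul_eq_of_mem.mpr fun g a ha hga => ?_
  have hgx : ∀ h : G, φ (h • g • x) = φ (h • x) := fun h => by
    rw [smul_smul, ← ha (h * g), mul_smul, hga h]
  ext z
  rw [Set.mem_smul_set_iff_inv_smul_mem]
  simp only [Set.mem_ofPred_eq]
  refine ⟨fun hz h => ?_, fun hz h => ?_⟩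
  · rw [← hgx, smul_smul, ← hz (h * g), mul_smul, smul_inv_smul]
  · rw [smul_smul, hz, ← hgx (h * g⁻¹), mul_smul, inv_smul_smul]

theorem IsPreprimitive.apply_eq_of_forall_smul_eq {G X β : Type*} [Group G] [MulAction G X]
    [IsPreprimitive G X] {φ : X → β} {x y : X} (hxy : x ≠ y)
    (h : ∀ g : G, φ (g • x) = φ (g • y)) (z : X) : φ z = φ x := by
  rcases IsPreprimitive.isTrivialBlock_of_isBlock (isBlock_setOf_forall_smul_eq (G := G) φ x) with
    hsub | huniv
  · exact absurd (hsub (fun _ => rfl) fun g => (h g).symm) hxy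
  · have hz : z ∈ {z | ∀ g : G, φ (g • z) = φ (g • x)} := huniv ▸ Set.mem_univ z
    simpa using hz 1

theorem apply_eq_of_card_fiber_lt {t u : Ω → Ω} (hrank : rank (u ∘ t) + 1 = rank t) {x y : Ω}
    (hx : x ∈ univ.image t) (hy : y ∈ univ.image t)
    (hx_lt : #{z | t z = x} < #{z | u (t z) = u x})
    (hy_lt : #{z | t z = y} < #{z | u (t z) = u y}) : u x = u y := by
  by_contra hne
  obtain ⟨x', hx', hux'⟩ := exists_ne_apply_eq_of_card_fiber_lt hx_lt
  obtain ⟨y', hy', huy'⟩ := exists_ne_apply_eq_of_card_fiber_lt hy_lt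
  have := card_image_add_two_le hx (mem_image_of_mem t (mem_univ x')) hy
    (mem_image_of_mem t (mem_univ y')) hx'.symm hy'.symm hux'.symm huy'.symm hne
  rw [← rank_comp, ← rank] at this
  omega

section Action

variable {M : Type*} [Group M] [Fintype M] [MulAction M Ω] [IsPretransitive M Ω]

theorem card_filter_smul_eq_mul_card (a b : Ω) :
    #{g : M | g • a = b} * Fintype.card Ω = Fintype.card M := by
  have hconst : ∀ b', #{g : M | g • a = b'} = #{g : M | g • a = b} := by
    intro b'
    obtain ⟨h, hh⟩ := exists_smul_eq M b' b
    refine card_bij' (fun g _ => h * g) (fun g _ => h⁻¹ * g) ?_ ?_ ?_ ?_ <;>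
      intro g hg <;> simp_all [mul_smul, inv_smul_eq_iff]
  have := sum_card_fiberwise_eq_card_filter univ univ (· • a : M → Ω)
  rw [sum_congr rfl fun b' _ => hconst b', sum_const, filter_true_of_mem fun _ _ => mem_univ _,
    card_univ, card_univ, smul_eq_mul] at this
  rw [← this, mul_comm]

theorem card_filter_smul_mem_mul_card (a : Ω) (F : Finset Ω) :
    #{g : M | g • a ∈ F} * Fintype.card Ω = #F * Fintype.card M := by
  rw [← sum_card_fiberwise_eq_card_filter, sum_mul, ← sum_const_nat fun b _ =>
    card_filter_smul_eq_mul_card a b]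

end Action

section MinimalRank

variable {M : Type*} [Group M] [MulAction M Ω] {S : Set (Ω → Ω)} {r : ℕ}

theorem rank_mul_card_fiber_eq_card [Fintype M] [IsPretransitive M Ω]
    (hS : ∀ f ∈ S, ∀ g ∈ S, g ∘ f ∈ S) (hMS : ∀ g : M, (g • · : Ω → Ω) ∈ S)
    (hmin : ∀ f ∈ S, r ≤ rank f) {f : Ω → Ω} (hf : f ∈ S) (hfr : rank f = r)
    {s : Ω → Ω} (hs : s ∈ S) (hsr : rank s = r) {c : Ω} (hc : c ∈ univ.image s) :
    r * #{z | s z = c} = Fintype.card Ω := by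
  set F : Finset Ω := {z | s z = c}
  have htransversal : ∀ g : M, #{b ∈ univ.image f | s (g • b) = c} = 1 := by
    intro g
    have hsg : rank (s ∘ (g • ·)) = r := by
      rw [rank_comp_of_surjective _ (MulAction.surjective g), hsr]
    have hle := rank_comp_le_right (s ∘ (g • ·)) f
    have hge := hmin _ (hS f hf _ (hS _ (hMS g) s hs))
    refine card_filter_image_eq_one (s := s ∘ (g • ·)) (by omega) (by omega) ?_
    rwa [← image_image, image_univ_of_surjective (MulAction.surjective g)]
  have hcount : ∀ b, #{g : M | s (g • b) = c} * Fintype.card Ω = #F * Fintype.card M := by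
    intro b
    rw [← card_filter_smul_mem_mul_card b F]
    simp [F]
  have hdouble := sum_card_bipartiteAbove_eq_sum_card_bipartiteBelow
    (s := (univ : Finset M)) (t := univ.image f) (r := fun g b => s (g • b) = c)
  simp only [bipartiteAbove, bipartiteBelow, htransversal, sum_const, card_univ,
    smul_eq_mul, mul_one] at hdouble
  refine Nat.eq_of_mul_eq_mul_right (Fintype.card_pos (α := M)) ?_
  calc r * #F * Fintype.card M = ∑ b ∈ univ.image f, #F * Fintype.card M := by
        rw [sum_const, smul_eq_mul, ← rank, hfr, mul_assoc]
    _ = ∑ b ∈ univ.image f, #{g : M | s (g • b) = c} * Fintype.card Ω :=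
        sum_congr rfl fun b _ => (hcount b).symm
    _ = Fintype.card Ω * Fintype.card M := by rw [← sum_mul, ← hdouble, mul_comm]

theorem rank_ne_succ_of_minimal [Fintype M] [IsPreprimitive M Ω]
    (hS : ∀ f ∈ S, ∀ g ∈ S, g ∘ f ∈ S) (hMS : ∀ g : M, (g • · : Ω → Ω) ∈ S)
    (hmin : ∀ f ∈ S, r ≤ rank f) (hr : 1 < r) {f : Ω → Ω} (hf : f ∈ S)
    (hfr : rank f = r) {t : Ω → Ω} (ht : t ∈ S) : rank t ≠ r + 1 := by
  intro htr
  set A := univ.image t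
  obtain ⟨x, hx, y, hy, hxy, hfxy⟩ : ∃ x ∈ A, ∃ y ∈ A, x ≠ y ∧ f x = f y :=
    exists_ne_map_eq_of_card_lt_of_maps_to (t := univ.image f) (by rw [← rank, ← rank]; omega)
      fun a _ => mem_image_of_mem f (mem_univ a)
  have hrank : ∀ g : M, rank (f ∘ (g • ·) ∘ t) = r := fun g => by
    have := rank_comp_le_left f ((g • ·) ∘ t)
    have := rank_comp_le_right f (g • ·)
    have := hmin _ (hS _ (hS t ht _ (hMS g)) f hf)
    omega
  have hfiber : ∀ g : M, ∀ a ∈ A, r * #{z | f (g • t z) = f (g • a)} = Fintype.card Ω :=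
    fun g a ha => rank_mul_card_fiber_eq_card hS hMS hmin hf hfr (hS _ (hS t ht _ (hMS g)) f hf)
      (hrank g) (by
        rw [← image_image, ← image_image]
        exact mem_image_of_mem _ (mem_image_of_mem _ ha))
  have hfiber_eq : ∀ g : M, ∀ a ∈ A,
      #{z | f (g • t z) = f (g • a)} = #{z | f (t z) = f a} := fun g a ha =>
    Nat.eq_of_mul_eq_mul_left (by omega : 0 < r) <| by
      simpa using (hfiber g a ha).trans (hfiber 1 a ha).symm
  have hcollapse : ∀ g : M, f (g • x) = f (g • y) := fun g =>
    apply_eq_of_card_fiber_lt (u := fun b => f (g • b)) (by rw [htr, ← hrank g]; rfl) hx hy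
      (hfiber_eq g x hx ▸ card_fiber_lt_of_apply_eq hxy hy hfxy)
      (hfiber_eq g y hy ▸ card_fiber_lt_of_apply_eq hxy.symm hx hfxy.symm)
  have := rank_le_one_of_forall_eq (IsPreprimitive.apply_eq_of_forall_smul_eq hxy hcollapse)
  omega

end MinimalRank

theorem stmt16 (S : Set (Ω → Ω)) (hS : ∀ f ∈ S, ∀ g ∈ S, (g ∘ f) ∈ S)
    (G : Subgroup (Equiv.Perm Ω)) (hGS : ∀ g : Equiv.Perm Ω, g ∈ G → ⇑g ∈ S)
    (hG : IsPrimitive G) (r : ℕ) (hr1 : 1 < r)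
    (hr : ∃ f ∈ S, rank f = r) (hmin : ∀ f ∈ S, r ≤ rank f) :
    ¬ ∃ h ∈ S, rank h = r + 1 := by
  classical
  have : IsPreprimitive G Ω := { hG.1 with isTrivialBlock_of_isBlock := hG.2 _ }
  obtain ⟨f, hf, hfr⟩ := hr
  rintro ⟨t, ht, htr⟩
  exact rank_ne_succ_of_minimal (M := G) hS (fun g => hGS g.1 g.2) hmin hr1 hf hfr ht htr
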